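/- For all integers m ≥ 3 and n ≥ 2, the spectral gap of the generalised pancake graph satisfies λ_1(P_m(n)) − λ_2(P_m(n)) < 2. -/

import Mathlib

open Polynomial

/-- An `m`-coloured permutation of `{1, …, n}`: a pair `(χ, ψ)` of a colour
function `χ : [n] → ℤ/mℤ` and a permutation `ψ` of `[n]` (positions and letters
are 0-indexed, so the letter `1` of the paper corresponds to `0 : Fin n`). -/
abbrev ColouredPerm (m n : ℕ) := (Fin n → ZMod m) × Equiv.Perm (Fin n)

/-- The map on positions underlying reversal of the prefix of length `k`
(for `1 ≤ k ≤ n`; it is the identity outside this range of `k`). -/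
def flipFun (n k : ℕ) : Fin n → Fin n := fun t =>
  if h : t.val < k ∧ k ≤ n then ⟨k - 1 - t.val, by omega⟩ else t

theorem flipFun_involutive (n k : ℕ) : Function.Involutive (flipFun n k) := by
  intro t
  unfold flipFun
  by_cases h : t.val < k ∧ k ≤ n
  · rw [dif_pos h, dif_pos (by simp only [Fin.val_mk]; omega)]
    apply Fin.ext
    simp only [Fin.val_mk]
    omega
  · rw [dif_neg h, dif_neg h]

/-- Reversal of the prefix of length `k`, as a permutation of positions. -/
def flipPerm (n k : ℕ) : Equiv.Perm (Fin n) := (flipFun_involutive n k).toPerm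

/-- The prefix reversal `r_k^ε` acting on `m`-coloured permutations: it
reverses the prefix of length `k` and adds `ε` to the colours in that prefix. -/
def prefixRev (m n : ℕ) (k : ℕ) (ε : ZMod m) (σ : ColouredPerm m n) :
    ColouredPerm m n :=
  (fun t => if t.val < k then σ.1 (flipPerm n k t) + ε else σ.1 t,
   σ.2 * flipPerm n k)

/-- Adjacency in the generalised pancake graph: two distinct coloured
permutations are adjacent iff one is obtained from the other by a prefix
reversal `r_k^ε` with `1 ≤ k ≤ n` and `ε ∈ {+1, -1}`. -/
def pancakeAdj (m n : ℕ) (σ τ : ColouredPerm m n) : Prop :=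
  σ ≠ τ ∧ ∃ k, 1 ≤ k ∧ k ≤ n ∧ ∃ ε : ZMod m, (ε = 1 ∨ ε = -1) ∧
    (τ = prefixRev m n k ε σ ∨ σ = prefixRev m n k ε τ)

/-- The generalised pancake graph `𝒫_m(n)`. -/
def pancakeGraph (m n : ℕ) : SimpleGraph (ColouredPerm m n) where
  Adj := pancakeAdj m n
  symm := ⟨by
    rintro a b ⟨hab, k, hk1, hk2, ε, hε, h⟩
    exact ⟨hab.symm, k, hk1, hk2, ε, hε, h.symm⟩⟩
  loopless := ⟨by rintro a ⟨h, -⟩; exact h rfl⟩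

open Classical in
/-- The (real) adjacency matrix of the generalised pancake graph `𝒫_m(n)`. -/
noncomputable def pancakeAdjMatrix (m n : ℕ) :
    Matrix (ColouredPerm m n) (ColouredPerm m n) ℝ :=
  Matrix.of fun σ τ => if pancakeAdj m n σ τ then 1 else 0

/-- The `i`-th largest eigenvalue (`i = 1, 2, …`) of a real matrix `M`,
i.e. the `i`-th largest root of its characteristic polynomial, counted
with multiplicity (junk value `0` if there are fewer than `i` real roots). -/
noncomputable def nthLargestEig {V : Type*} [Fintype V] [DecidableEq V]
    (M : Matrix V V ℝ) (i : ℕ) : ℝ :=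
  ((M.charpoly.roots.sort (· ≤ ·)).reverse).getD (i - 1) 0

/-- The diagonal matrix `D_n = diag(0, 1, …, n-1)`. -/
noncomputable def Dmat (n : ℕ) : Matrix (Fin n) (Fin n) ℝ :=
  Matrix.diagonal fun j => (j.val : ℝ)

/-- The 0/1 matrix `E_n`, whose `(i, j)` entry (1-indexed) is `1` iff
`i + j ≤ n + 1`. -/
noncomputable def Emat (n : ℕ) : Matrix (Fin n) (Fin n) ℝ :=
  Matrix.of fun j j' => if (j.val + 1) + (j'.val + 1) ≤ n + 1 then 1 else 0

/-- The `mn × mn` block circulant matrix `circ(B_0, …, B_{m-1})` whose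
`(r, s)` block is `B_{s - r mod m}`. -/
def blockCirc (m n : ℕ) (B : ZMod m → Matrix (Fin n) (Fin n) ℝ) :
    Matrix (ZMod m × Fin n) (ZMod m × Fin n) ℝ :=
  Matrix.of fun p q => B (q.1 - p.1) p.2 q.2

/-- The part `V_{i,j}` of the vertex set of `𝒫_m(n)`: those coloured
permutations in which the letter `1` (here `0 : Fin n`) occupies position `j`
with colour `i`. -/
def Vpart (m n : ℕ) (i : ZMod m) (j : Fin n) : Set (ColouredPerm m n) :=
  {σ | σ.2 j = ⟨0, j.pos⟩ ∧ σ.1 j = i}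

/-!
All eigenvalues of the `2n`-regular nonnegative adjacency matrix `A` of `𝒫_m(n)` are at most `2n`
(Gershgorin), and `2n` is one of them. If `f : ℤ/mℤ → ℝ` satisfies `f (i + 1) + f (i - 1) = c f i`
and `w` is an eigenvector of `2Dₙ + c Eₙ` for `μ`, then `σ ↦ f (colour of 1) · w (position of 1)`
is an eigenvector of `A` for `μ`. With `f i = cos (2π ⌊m/2⌋ i / m)` we get `-2 ≤ c < 0`; the
Rayleigh quotient of a two-point test vector then gives an eigenvalue `μ > 2n - 2` of
`2Dₙ + c Eₙ`, and its quadratic form shows `μ < 2n`. Hence `λ₂ ≥ μ > λ₁ - 2`.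
-/

open Matrix

section MatrixSpectrum

variable {ι : Type*} [Fintype ι] [DecidableEq ι]

theorem Matrix.mem_roots_charpoly_iff_hasEigenvalue {K : Type*} [Field K] (A : Matrix ι ι K)
    (μ : K) : μ ∈ A.charpoly.roots ↔ Module.End.HasEigenvalue (toLin' A) μ := by
  rw [mem_roots A.charpoly_monic.ne_zero, ← mem_spectrum_iff_isRoot_charpoly, ← spectrum_toLin',
    Module.End.hasEigenvalue_iff_mem_spectrum]

theorem Matrix.mem_roots_charpoly_of_mulVec_eq_smul {K : Type*} [Field K] {A : Matrix ι ι K}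
    {μ : K} {v : ι → K} (hv : v ≠ 0) (h : A *ᵥ v = μ • v) : μ ∈ A.charpoly.roots :=
  (A.mem_roots_charpoly_iff_hasEigenvalue μ).2 <|
    Module.End.hasEigenvalue_of_hasEigenvector ⟨Module.End.mem_eigenspace_iff.2 h, hv⟩

theorem Matrix.le_of_mem_roots_charpoly_of_nonneg {A : Matrix ι ι ℝ} {d : ℝ}
    (hA : ∀ i j, 0 ≤ A i j) (hrow : ∀ i, ∑ j, A i j = d) {η : ℝ} (hη : η ∈ A.charpoly.roots) :
    η ≤ d := by
  obtain ⟨k, hk⟩ := eigenvalue_mem_ball ((A.mem_roots_charpoly_iff_hasEigenvalue η).1 hη)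
  rw [Metric.mem_closedBall, Real.dist_eq] at hk
  simp only [Real.norm_of_nonneg (hA k _)] at hk
  rw [← hrow k, ← Finset.add_sum_erase _ _ (Finset.mem_univ k)]
  linarith [le_abs_self (η - A k k)]

theorem Matrix.IsHermitian.exists_eigenvector_rayleigh_le {A : Matrix ι ι ℝ} (hA : A.IsHermitian)
    {x : ι → ℝ} (hx : x ≠ 0) :
    ∃ μ : ℝ, ∃ w ≠ 0, A *ᵥ w = μ • w ∧ x ⬝ᵥ (A *ᵥ x) ≤ μ * (x ⬝ᵥ x) := by
  set T := toEuclideanLin A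
  set xe := WithLp.toLp 2 x
  have hxe : xe ≠ 0 := fun h => hx (congrArg WithLp.ofLp h)
  have : Nontrivial (EuclideanSpace ℝ ι) := ⟨⟨xe, 0, hxe⟩⟩
  set rayleigh := fun z : {z : EuclideanSpace ℝ ι // z ≠ 0} =>
    RCLike.re (inner ℝ (T z) (z : EuclideanSpace ℝ ι)) / ‖(z : EuclideanSpace ℝ ι)‖ ^ 2
  obtain ⟨w, hw, hw0⟩ := Submodule.exists_mem_ne_zero_of_ne_bot
    (isSymmetric_toEuclideanLin_iff.2 hA).hasEigenvalue_iSup_of_finiteDimensional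
  refine ⟨⨆ z, rayleigh z, w.ofLp, fun h => hw0 (by simpa using congrArg (WithLp.toLp 2) h),
    by simpa [T, rayleigh] using congrArg WithLp.ofLp (Module.End.mem_eigenspace_iff.1 hw), ?_⟩
  have hbdd : BddAbove (Set.range rayleigh) := ⟨‖LinearMap.toContinuousLinearMap T‖, by
    rintro _ ⟨z, rfl⟩
    exact (le_abs_self _).trans ((LinearMap.toContinuousLinearMap T).rayleighQuotient_le_norm z)⟩
  have hinner : RCLike.re (inner ℝ (T xe) xe) = x ⬝ᵥ (A *ᵥ x) := by
    simp [T, xe, dotProduct, PiLp.inner_apply]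
  have hnorm : ‖xe‖ ^ 2 = x ⬝ᵥ x := by
    rw [EuclideanSpace.real_norm_sq_eq]
    simp [xe, dotProduct, sq]
  have hray : rayleigh ⟨xe, hxe⟩ ≤ ⨆ z, rayleigh z := le_ciSup hbdd ⟨xe, hxe⟩
  simp only [rayleigh, hinner, hnorm] at hray
  rwa [div_le_iff₀ (by rw [← hnorm]; positivity)] at hray

end MatrixSpectrum

section SortedEigenvalues

theorem List.SortedGE.min_le_getD_one {α : Type*} [LinearOrder α] {l : List α} (hl : l.SortedGE)
    {a b : α} (ha : a ∈ l) (hb : b ∈ l) (hab : a ≠ b) (d : α) : min a b ≤ l.getD 1 d := by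
  obtain ⟨i, hi, rfl⟩ := List.getElem_of_mem ha
  obtain ⟨j, hj, rfl⟩ := List.getElem_of_mem hb
  have hij : i ≠ j := by rintro rfl; exact hab rfl
  have hanti := List.sortedGE_iff_getElem_ge_getElem_of_le.1 hl
  rw [List.getD_eq_getElem _ _ (by omega)]
  rcases Nat.eq_zero_or_pos i with rfl | hi0
  · exact (min_le_right _ _).trans (hanti (by omega))
  · exact (min_le_left _ _).trans (hanti hi0)

variable {V : Type*} [Fintype V] [DecidableEq V] {M : Matrix V V ℝ}

theorem nthLargestEig_one_le {a B : ℝ} (ha : a ∈ M.charpoly.roots)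
    (hB : ∀ r ∈ M.charpoly.roots, r ≤ B) : nthLargestEig M 1 ≤ B := by
  have hlen : 0 < ((M.charpoly.roots.sort (· ≤ ·)).reverse).length :=
    List.length_pos_of_mem (by simpa using ha)
  rw [nthLargestEig, List.getD_eq_getElem _ _ hlen]
  exact hB _ (by simpa only [List.mem_reverse, Multiset.mem_sort] using List.getElem_mem hlen)

theorem min_le_nthLargestEig_two {a b : ℝ} (ha : a ∈ M.charpoly.roots)
    (hb : b ∈ M.charpoly.roots) (hab : a ≠ b) : min a b ≤ nthLargestEig M 2 :=
  (Multiset.pairwise_sort _ _).sortedLE.reverse.min_le_getD_one (by simpa using ha)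
    (by simpa using hb) hab 0

end SortedEigenvalues

section Flip

variable {n : ℕ}

theorem flipFun_of_lt {k : ℕ} {t : Fin n} (ht : t.val < k) (hk : k ≤ n) :
    flipFun n k t = ⟨k - 1 - t.val, by omega⟩ :=
  dif_pos ⟨ht, hk⟩

theorem flipFun_of_le {k : ℕ} {t : Fin n} (ht : k ≤ t.val) : flipFun n k t = t :=
  dif_neg (by omega)

theorem flipPerm_mul_self (n k : ℕ) : flipPerm n k * flipPerm n k = 1 :=
  Equiv.ext (flipFun_involutive n k)

theorem val_flipFun_lt {k : ℕ} {t : Fin n} (ht : t.val < k) : (flipFun n k t).val < k := by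
  unfold flipFun
  split_ifs
  · show k - 1 - t.val < k
    omega
  · exact ht

theorem flipFun_zero [NeZero n] {k : ℕ} (hk : 1 ≤ k) (hkn : k ≤ n) :
    (flipFun n k 0).val = k - 1 := by
  rw [flipFun_of_lt (by simp; omega) hkn]
  simp

end Flip

section Quotient

variable {n : ℕ}

theorem Emat_comm (j j' : Fin n) : Emat n j j' = Emat n j' j := by
  simp only [Emat, of_apply, add_comm (j.val + 1)]

theorem Emat_nonneg (j j' : Fin n) : 0 ≤ Emat n j j' := by
  simp only [Emat, of_apply]; split_ifs <;> norm_num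

theorem sum_Ioc_flipFun (j : Fin n) (h : Fin n → ℝ) :
    ∑ k ∈ Finset.Ioc j.val n, h (flipFun n k j) = ∑ j', Emat n j j' * h j' := by
  simp only [Emat, of_apply, ite_mul, one_mul, zero_mul]
  rw [← Finset.sum_filter]
  refine Finset.sum_nbij' (fun k => flipFun n k j) (fun j' => j.val + j'.val + 1) ?_ ?_ ?_ ?_ ?_
  all_goals simp only [Finset.mem_filter, Finset.mem_univ, true_and, Finset.mem_Ioc]
  · intro k hk
    simp only [flipFun_of_lt hk.1 hk.2]
    omega
  · intro j' hj'
    omega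
  · intro k hk
    simp only [flipFun_of_lt hk.1 hk.2]
    omega
  · intro j' hj'
    rw [flipFun_of_lt (by omega) (by omega)]
    ext
    simp only
    omega
  · intros
    trivial

theorem sum_Emat_row (j : Fin n) : ∑ j', Emat n j j' = n - j.val := by
  have h := sum_Ioc_flipFun j fun _ => 1
  simp only [Finset.sum_const, Nat.card_Ioc, nsmul_eq_mul, mul_one] at h
  rw [← h, Nat.cast_sub j.isLt.le]

/-- The diagonal block `2 Dₙ + c Eₙ`; for `c = 2 cos (2πℓ/m)` its eigenvalues are eigenvalues of
the block circulant `circ(2Dₙ, Eₙ, 0, …, 0, Eₙ)` describing `𝒫_m(n)` on the parts `V_{i,j}`. -/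
noncomputable def quotientMatrix (n : ℕ) (c : ℝ) : Matrix (Fin n) (Fin n) ℝ :=
  (2 : ℝ) • Dmat n + c • Emat n

theorem quotientMatrix_apply (c : ℝ) (j j' : Fin n) :
    quotientMatrix n c j j' = (if j = j' then 2 * (j.val : ℝ) else 0) + c * Emat n j j' := by
  simp only [quotientMatrix, Dmat, Matrix.add_apply, Matrix.smul_apply, diagonal_apply, smul_eq_mul]
  split_ifs <;> ring

theorem quotientMatrix_isHermitian (c : ℝ) : (quotientMatrix n c).IsHermitian :=
  IsHermitian.ext fun j j' => by
    simp only [star_trivial, quotientMatrix_apply, Emat_comm j, eq_comm (a := j')]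
    split_ifs with h <;> simp [h]

theorem quotientMatrix_mulVec (c : ℝ) (w : Fin n → ℝ) (j : Fin n) :
    (quotientMatrix n c *ᵥ w) j = 2 * j.val * w j + c * ∑ j', Emat n j j' * w j' := by
  simp only [mulVec, dotProduct, quotientMatrix_apply, add_mul, Finset.sum_add_distrib, ite_mul,
    zero_mul, Finset.sum_ite_eq, Finset.mem_univ, if_true, Finset.mul_sum, mul_assoc]

/-- Since `n - j` is the `j`-th row sum of `Eₙ`, the diagonal part `2n - 2Dₙ` also becomes a sum
over the support of `Eₙ`. -/
theorem quadratic_form_quotientMatrix (c : ℝ) (w : Fin n → ℝ) :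
    2 * n * (w ⬝ᵥ w) - w ⬝ᵥ (quotientMatrix n c *ᵥ w) =
      ∑ j, ∑ j', Emat n j j' * (w j ^ 2 + w j' ^ 2 - c * (w j * w j')) := by
  have hrow : ∀ f : Fin n → ℝ, ∑ j, ∑ j', Emat n j j' * f j = ∑ j, (n - j.val) * f j := by
    intro f
    simp only [← Finset.sum_mul, sum_Emat_row]
  have hcol : ∀ f : Fin n → ℝ, ∑ j, ∑ j', Emat n j j' * f j' = ∑ j, (n - j.val) * f j := by
    intro f
    rw [Finset.sum_comm]
    simp only [Emat_comm _ (_ : Fin n)]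
    exact hrow f
  have hdiag : ∑ j, ∑ j', Emat n j j' * (w j ^ 2 + w j' ^ 2) = ∑ j, 2 * (n - j.val) * w j ^ 2 := by
    calc _ = ∑ j, ∑ j', Emat n j j' * w j ^ 2 + ∑ j, ∑ j', Emat n j j' * w j' ^ 2 := by
          simp only [mul_add, Finset.sum_add_distrib]
      _ = _ := by
          rw [hrow, hcol, ← Finset.sum_add_distrib]
          exact Finset.sum_congr rfl fun _ _ => by ring
  simp only [mul_sub, Finset.sum_sub_distrib, hdiag, dotProduct, quotientMatrix_mulVec,
    Finset.mul_sum]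
  rw [← Finset.sum_sub_distrib, ← Finset.sum_sub_distrib]
  refine Finset.sum_congr rfl fun j _ => ?_
  have hcross : ∀ j', w j * (c * (Emat n j j' * w j')) = Emat n j j' * (c * (w j * w j')) :=
    fun _ => by ring
  simp only [mul_add, Finset.mul_sum, hcross]
  ring

end Quotient

section QuotientSpectrum

variable {n : ℕ} {c : ℝ}

theorem quadratic_form_quotientMatrix_pos (hc : -2 ≤ c) (hc2 : c < 2) {w : Fin n → ℝ}
    (hw : w ≠ 0) : 0 < 2 * n * (w ⬝ᵥ w) - w ⬝ᵥ (quotientMatrix n c *ᵥ w) := by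
  obtain ⟨k, hk⟩ := Function.ne_iff.1 hw
  set z : Fin n := ⟨0, k.pos⟩
  have hEz : ∀ j, Emat n j z = 1 := fun j => by simp [Emat, z]
  rw [quadratic_form_quotientMatrix, ← Fintype.sum_prod_type']
  -- `a² + b² - cab = ((2 - c)(a + b)² + (2 + c)(a - b)²) / 4`
  refine Finset.sum_pos' (fun p _ => mul_nonneg (Emat_nonneg _ _) (by
    nlinarith [mul_nonneg (sub_nonneg.2 hc2.le) (sq_nonneg (w p.1 + w p.2)),
      mul_nonneg (neg_le_iff_add_nonneg.1 hc) (sq_nonneg (w p.1 - w p.2))])) ?_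
  by_cases hz : w z = 0
  · exact ⟨(k, z), Finset.mem_univ _, by rw [hEz, hz]; nlinarith [sq_pos_of_ne_zero hk]⟩
  · exact ⟨(z, z), Finset.mem_univ _, by
      simp only [hEz, one_mul]; nlinarith [sq_pos_of_ne_zero hz]⟩

theorem quotientMatrix_eigenvalue_lt (hc : -2 ≤ c) (hc2 : c < 2) {μ : ℝ} {w : Fin n → ℝ}
    (hw : w ≠ 0) (h : quotientMatrix n c *ᵥ w = μ • w) : μ < 2 * n := by
  have hpos := quadratic_form_quotientMatrix_pos hc hc2 hw
  rw [h, dotProduct_smul, smul_eq_mul, ← sub_mul] at hpos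
  exact sub_pos.1 (pos_of_mul_pos_left hpos (Finset.sum_nonneg fun i _ => mul_self_nonneg _))

/-- The test vector `e_{n-1} + (c / 2n) e_0` has Rayleigh quotient above `2n - 2`. -/
theorem exists_quotientMatrix_eigenvector_gt (hn : 2 ≤ n) (hc : -2 ≤ c) (hc0 : c ≠ 0) :
    ∃ μ : ℝ, ∃ w ≠ 0, quotientMatrix n c *ᵥ w = μ • w ∧ 2 * n - 2 < μ := by
  set a : Fin n := ⟨n - 1, by omega⟩
  set b : Fin n := ⟨0, by omega⟩
  have hab : a ≠ b := fun h => by simp [a, b, Fin.ext_iff] at h; omega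
  set t : ℝ := c / (2 * n)
  have ht : c = 2 * n * t := by simp only [t]; field_simp
  have ht0 : t ≠ 0 := by rintro h; simp [h] at ht; exact hc0 ht
  set x : Fin n → ℝ := Pi.single a 1 + t • Pi.single b 1
  have hx : x ≠ 0 := fun h => by simpa [x, hab] using congrFun h a
  obtain ⟨μ, w, hw, hμ, hray⟩ := (quotientMatrix_isHermitian c).exists_eigenvector_rayleigh_le hx
  refine ⟨μ, w, hw, hμ, ?_⟩
  have hEaa : Emat n a a = 0 := if_neg (by simp only [a]; omega)
  have hEab : Emat n a b = 1 := if_pos (by simp only [a, b]; omega)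
  have hEbb : Emat n b b = 1 := if_pos (by simp only [b]; omega)
  have haa : quotientMatrix n c a a = 2 * (n - 1) := by
    simp [quotientMatrix_apply, hEaa, a, Nat.cast_sub (by omega : 1 ≤ n)]
  have hab' : quotientMatrix n c a b = c := by simp [quotientMatrix_apply, hab, hEab]
  have hba : quotientMatrix n c b a = c := by
    simp [quotientMatrix_apply, hab.symm, Emat_comm b, hEab]
  have hbb : quotientMatrix n c b b = c := by simp [quotientMatrix_apply, hEbb, b]
  have hxx : x ⬝ᵥ x = 1 + t ^ 2 := by
    simp [x, dotProduct_add, hab, hab.symm]; ring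
  have hxMx : x ⬝ᵥ (quotientMatrix n c *ᵥ x) = 2 * (n - 1) + 2 * t * c + t ^ 2 * c := by
    simp [x, mulVec_add, mulVec_smul, dotProduct_add, add_dotProduct, haa, hab', hba, hbb]
    ring
  rw [hxx, hxMx] at hray
  have hgain : 2 * (n - 1) + 2 * t * c + t ^ 2 * c - (2 * n - 2) * (1 + t ^ 2) =
      t ^ 2 * (2 * n + 2 + c) := by
    rw [ht]; ring
  have hnR : (2 : ℝ) ≤ n := by exact_mod_cast hn
  have hgain_pos : 0 < t ^ 2 * (2 * n + 2 + c) :=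
    mul_pos (sq_pos_of_ne_zero ht0) (by linarith)
  exact lt_of_mul_lt_mul_right (by linarith) (by positivity : (0 : ℝ) ≤ 1 + t ^ 2)

end QuotientSpectrum

section PancakeGraph

variable {m n : ℕ}

theorem prefixRev_fst_of_lt {k : ℕ} (ε : ZMod m) (σ : ColouredPerm m n) {t : Fin n}
    (ht : t.val < k) : (prefixRev m n k ε σ).1 t = σ.1 (flipFun n k t) + ε :=
  if_pos ht

theorem prefixRev_fst_of_le {k : ℕ} (ε : ZMod m) (σ : ColouredPerm m n) {t : Fin n}
    (ht : k ≤ t.val) : (prefixRev m n k ε σ).1 t = σ.1 t :=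
  if_neg (by omega)

theorem prefixRev_neg_prefixRev (k : ℕ) (ε : ZMod m) (σ : ColouredPerm m n) :
    prefixRev m n k (-ε) (prefixRev m n k ε σ) = σ := by
  refine Prod.ext (funext fun t => ?_) (by simp [prefixRev, mul_assoc, flipPerm_mul_self])
  rcases lt_or_ge t.val k with ht | ht
  · rw [prefixRev_fst_of_lt _ _ ht, prefixRev_fst_of_lt _ _ (val_flipFun_lt ht),
      flipFun_involutive, add_neg_cancel_right]
  · rw [prefixRev_fst_of_le _ _ ht, prefixRev_fst_of_le _ _ ht]

theorem prefixRev_ne_self [NeZero n] {k : ℕ} (hk : 1 ≤ k) {ε : ZMod m}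
    (hε : ε ≠ 0) (σ : ColouredPerm m n) : prefixRev m n k ε σ ≠ σ := by
  intro h
  have hflip : flipPerm n k = 1 := mul_left_cancel ((congrArg Prod.snd h).trans (mul_one _).symm)
  have h0 : flipFun n k 0 = 0 := Equiv.ext_iff.1 hflip 0
  have hcol := congrFun (congrArg Prod.fst h) 0
  rw [prefixRev_fst_of_lt _ _ (by simp; omega), h0, add_eq_left] at hcol
  exact hε hcol

theorem prefixRev_inj [NeZero n] {k k' : ℕ} (hk : 1 ≤ k) (hkn : k ≤ n) (hk' : 1 ≤ k')
    (hkn' : k' ≤ n) {ε ε' : ZMod m} {σ : ColouredPerm m n}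
    (h : prefixRev m n k ε σ = prefixRev m n k' ε' σ) : k = k' ∧ ε = ε' := by
  have hflip : flipPerm n k = flipPerm n k' := mul_left_cancel (congrArg Prod.snd h)
  have h0 : flipFun n k 0 = flipFun n k' 0 := Equiv.ext_iff.1 hflip 0
  have hkk : k = k' := by
    have := congrArg Fin.val h0
    rw [flipFun_zero hk hkn, flipFun_zero hk' hkn'] at this
    omega
  subst hkk
  have hcol := congrFun (congrArg Prod.fst h) 0
  rw [prefixRev_fst_of_lt _ _ (by simp; omega), prefixRev_fst_of_lt _ _ (by simp; omega),
    add_right_inj] at hcol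
  exact ⟨rfl, hcol⟩

variable [NeZero m]

open Classical in
theorem filter_pancakeAdj_eq_image [NeZero n] [Fact (1 < m)] (σ : ColouredPerm m n) :
    Finset.univ.filter (pancakeAdj m n σ) =
      (Finset.Icc 1 n ×ˢ ({1, -1} : Finset (ZMod m))).image fun p => prefixRev m n p.1 p.2 σ := by
  ext τ
  simp only [Finset.mem_filter, Finset.mem_univ, true_and, Finset.mem_image, Finset.mem_product,
    Finset.mem_Icc, Finset.mem_insert, Finset.mem_singleton, Prod.exists]
  constructor
  · rintro ⟨-, k, hk, hkn, ε, hε, rfl | rfl⟩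
    · exact ⟨k, ε, ⟨⟨hk, hkn⟩, hε⟩, rfl⟩
    · refine ⟨k, -ε, ⟨⟨hk, hkn⟩, by rcases hε with rfl | rfl <;> simp⟩, ?_⟩
      rw [prefixRev_neg_prefixRev]
  · rintro ⟨k, ε, ⟨⟨hk, hkn⟩, hε⟩, rfl⟩
    have hε0 : ε ≠ 0 := by rcases hε with rfl | rfl <;> simp
    exact ⟨(prefixRev_ne_self hk hε0 σ).symm, k, hk, hkn, ε, hε, Or.inl rfl⟩

theorem sum_pancakeAdjMatrix_mul [NeZero n] [Fact (2 < m)] (σ : ColouredPerm m n)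
    (g : ColouredPerm m n → ℝ) :
    ∑ τ, pancakeAdjMatrix m n σ τ * g τ =
      ∑ k ∈ Finset.Icc 1 n, (g (prefixRev m n k 1 σ) + g (prefixRev m n k (-1) σ)) := by
  have : Fact (1 < m) := ⟨by have := Fact.out (p := 2 < m); omega⟩
  classical
  simp only [pancakeAdjMatrix, of_apply, ite_mul, one_mul, zero_mul]
  rw [← Finset.sum_filter, filter_pancakeAdj_eq_image, Finset.sum_image, Finset.sum_product]
  · simp [Finset.sum_pair ZMod.neg_one_ne_one.symm]
  · rintro ⟨k, ε⟩ hp ⟨k', ε'⟩ hq h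
    simp only [Finset.coe_product, Set.mem_prod, Finset.mem_coe, Finset.mem_Icc] at hp hq
    obtain ⟨rfl, rfl⟩ := prefixRev_inj hp.1.1 hp.1.2 hq.1.1 hq.1.2 h
    rfl

end PancakeGraph

section Lift

variable {m n : ℕ} [NeZero n]

/-- The position of the letter `0 : Fin n` (the paper's letter `1`) in `σ`; thus
`σ ∈ Vpart m n i j` iff `letterColour σ = i` and `letterPos σ = j`. -/
def letterPos (σ : ColouredPerm m n) : Fin n := σ.2.symm 0

def letterColour (σ : ColouredPerm m n) : ZMod m := σ.1 (letterPos σ)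

theorem letterPos_prefixRev (k : ℕ) (ε : ZMod m) (σ : ColouredPerm m n) :
    letterPos (prefixRev m n k ε σ) = flipFun n k (letterPos σ) := by
  simp [letterPos, prefixRev, flipPerm, Equiv.Perm.mul_def]

theorem letterColour_prefixRev (k : ℕ) (ε : ZMod m) (σ : ColouredPerm m n) :
    letterColour (prefixRev m n k ε σ) =
      if (letterPos σ).val < k then letterColour σ + ε else letterColour σ := by
  rw [letterColour, letterPos_prefixRev]
  split_ifs with h
  · rw [prefixRev_fst_of_lt _ _ (val_flipFun_lt h), flipFun_involutive, letterColour]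
  · rw [flipFun_of_le (not_lt.1 h), prefixRev_fst_of_le _ _ (not_lt.1 h), letterColour]

variable [NeZero m] [Fact (2 < m)]

/-- A vector that depends only on the colour and position of the letter `0` is mapped by the
adjacency matrix to such a vector: the prefix reversals of length `k ≤ letterPos σ` fix both,
and the longer ones move the letter to each position `j'` with `Emat n (letterPos σ) j' = 1`,
changing its colour by `±1`. -/
theorem pancakeAdjMatrix_mulVec_lift (g : ZMod m → Fin n → ℝ) (σ : ColouredPerm m n) :
    (pancakeAdjMatrix m n *ᵥ fun τ => g (letterColour τ) (letterPos τ)) σ =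
      2 * (letterPos σ).val * g (letterColour σ) (letterPos σ) +
        ∑ j', Emat n (letterPos σ) j' *
          (g (letterColour σ + 1) j' + g (letterColour σ - 1) j') := by
  set j := letterPos σ
  have hterm : ∀ k, g (letterColour (prefixRev m n k 1 σ)) (letterPos (prefixRev m n k 1 σ)) +
      g (letterColour (prefixRev m n k (-1) σ)) (letterPos (prefixRev m n k (-1) σ)) =
      if j.val < k then g (letterColour σ + 1) (flipFun n k j) +
        g (letterColour σ - 1) (flipFun n k j)
      else 2 * g (letterColour σ) j := by
    intro k
    simp only [letterColour_prefixRev, letterPos_prefixRev, ← sub_eq_add_neg]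
    split_ifs with h
    · rfl
    · rw [flipFun_of_le (not_lt.1 h)]; ring
  rw [mulVec, dotProduct, sum_pancakeAdjMatrix_mul]
  simp only [hterm]
  rw [show Finset.Icc 1 n = Finset.Ioc 0 n from Finset.Icc_add_one_left_eq_Ioc 0 n,
    ← Finset.sum_Ioc_consecutive _ (Nat.zero_le j.val) j.isLt.le,
    Finset.sum_ite_of_false (fun k hk => by simp at hk; omega),
    Finset.sum_ite_of_true (fun k hk => by simp at hk; omega),
    sum_Ioc_flipFun j fun j' => g (letterColour σ + 1) j' + g (letterColour σ - 1) j']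
  simp only [Finset.sum_const, Nat.card_Ioc, Nat.sub_zero, nsmul_eq_mul]
  ring

end Lift

section PancakeSpectrum

theorem pancakeAdjMatrix_nonneg {m n : ℕ} (σ τ : ColouredPerm m n) :
    0 ≤ pancakeAdjMatrix m n σ τ := by
  simp only [pancakeAdjMatrix, of_apply]; split_ifs <;> norm_num

variable {m n : ℕ} [NeZero m] [NeZero n] [Fact (2 < m)]

theorem sum_pancakeAdjMatrix_row (σ : ColouredPerm m n) :
    ∑ τ, pancakeAdjMatrix m n σ τ = 2 * n := by
  simpa [two_mul] using sum_pancakeAdjMatrix_mul σ fun _ => 1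

theorem le_of_mem_roots_charpoly_pancakeAdjMatrix {η : ℝ}
    (hη : η ∈ (pancakeAdjMatrix m n).charpoly.roots) : η ≤ 2 * n :=
  le_of_mem_roots_charpoly_of_nonneg pancakeAdjMatrix_nonneg sum_pancakeAdjMatrix_row hη

theorem two_mul_mem_roots_charpoly_pancakeAdjMatrix :
    2 * (n : ℝ) ∈ (pancakeAdjMatrix m n).charpoly.roots :=
  mem_roots_charpoly_of_mulVec_eq_smul (v := fun _ => 1) (Function.ne_iff.2 ⟨1, one_ne_zero⟩)
    (funext fun σ => by simpa [mulVec, dotProduct] using sum_pancakeAdjMatrix_row σ)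

theorem mem_roots_charpoly_pancakeAdjMatrix {c μ : ℝ} {f : ZMod m → ℝ}
    (hf : ∀ i, f (i + 1) + f (i - 1) = c * f i) (hf0 : f 0 ≠ 0) {w : Fin n → ℝ} (hw : w ≠ 0)
    (hμ : quotientMatrix n c *ᵥ w = μ • w) : μ ∈ (pancakeAdjMatrix m n).charpoly.roots := by
  obtain ⟨j, hj⟩ := Function.ne_iff.1 hw
  refine mem_roots_charpoly_of_mulVec_eq_smul (v := fun σ => f (letterColour σ) * w (letterPos σ))
    (Function.ne_iff.2 ⟨(0, Equiv.swap 0 j), ?_⟩) (funext fun σ => ?_)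
  · simpa [letterColour, letterPos] using ⟨hf0, hj⟩
  · have hμσ := congrFun hμ (letterPos σ)
    rw [quotientMatrix_mulVec] at hμσ
    rw [pancakeAdjMatrix_mulVec_lift (fun i j => f i * w j)]
    simp only [← add_mul, hf, Pi.smul_apply, smul_eq_mul] at hμσ ⊢
    rw [mul_left_comm μ, ← hμσ, mul_add, Finset.mul_sum, Finset.mul_sum]
    congr 1
    · ring
    · exact Finset.sum_congr rfl fun _ _ => by ring

end PancakeSpectrum

section ColourCharacter

theorem AddChar.re_map_add_add_re_map_sub {G : Type*} [AddGroup G] (ψ : AddChar G Circle)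
    (a g : G) : (ψ (a + g) : ℂ).re + (ψ (a - g) : ℂ).re = 2 * (ψ g : ℂ).re * (ψ a : ℂ).re := by
  rw [sub_eq_add_neg, ψ.map_add_eq_mul, ψ.map_add_eq_mul, ψ.map_neg_eq_inv]
  simp only [Circle.coe_mul, Circle.coe_inv_eq_conj, Complex.mul_re, Complex.conj_re,
    Complex.conj_im]
  ring

theorem cos_two_pi_mul_half_div_neg {m : ℕ} (hm : 3 ≤ m) :
    Real.cos (2 * Real.pi * (m / 2 : ℕ) / m) < 0 := by
  have hlo : (m : ℝ) < 4 * (m / 2 : ℕ) := by exact_mod_cast (by omega : m < 4 * (m / 2))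
  have hhi : 2 * ((m / 2 : ℕ) : ℝ) ≤ m := by exact_mod_cast (by omega : 2 * (m / 2) ≤ m)
  have hm0 : (0 : ℝ) < m := by positivity
  apply Real.cos_neg_of_pi_div_two_lt_of_lt
  · rw [lt_div_iff₀ hm0]; nlinarith [Real.pi_pos]
  · rw [div_lt_iff₀ hm0]; nlinarith [Real.pi_pos]

/-- The witness is `f i = cos (2π ⌊m/2⌋ i / m)`: the frequency `⌊m/2⌋` makes
`c = 2 cos (2π ⌊m/2⌋ / m)` negative for every `m ≥ 3`. -/
theorem exists_colour_eigenfunction {m : ℕ} [NeZero m] (hm : 3 ≤ m) :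
    ∃ c : ℝ, -2 ≤ c ∧ c < 0 ∧
      ∃ f : ZMod m → ℝ, f 0 ≠ 0 ∧ ∀ i, f (i + 1) + f (i - 1) = c * f i := by
  set ℓ : ZMod m := ((m / 2 : ℕ) : ZMod m)
  set θ := 2 * Real.pi * (m / 2 : ℕ) / m
  have hre : (ZMod.toCircle ℓ : ℂ).re = Real.cos θ := by
    have harg : 2 * Real.pi * Complex.I * ((m / 2 : ℕ) : ℂ) / m = (θ : ℂ) * Complex.I := by
      simp only [θ]; push_cast; ring
    rw [ZMod.toCircle_natCast, harg, Complex.exp_ofReal_mul_I_re]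
  refine ⟨2 * Real.cos θ, by linarith [Real.neg_one_le_cos θ],
    by linarith [cos_two_pi_mul_half_div_neg hm], fun i => (ZMod.toCircle (ℓ * i) : ℂ).re,
    by simp, fun i => ?_⟩
  rw [← hre]
  simpa only [mul_add, mul_sub, mul_one] using ZMod.toCircle.re_map_add_add_re_map_sub (ℓ * i) ℓ

end ColourCharacter

/-- For all integers `m ≥ 3` and `n ≥ 2`, the spectral gap of
the generalised pancake graph satisfies `λ₁(𝒫_m(n)) − λ₂(𝒫_m(n)) < 2`. -/
theorem pancake_spectral_gap_lt_two (m n : ℕ) (hm : 3 ≤ m) (hn : 2 ≤ n) :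
    haveI : NeZero m := ⟨by omega⟩
    nthLargestEig (pancakeAdjMatrix m n) 1 - nthLargestEig (pancakeAdjMatrix m n) 2 < 2 := by
  have : NeZero m := ⟨by omega⟩
  have : NeZero n := ⟨by omega⟩
  have : Fact (2 < m) := ⟨by omega⟩
  obtain ⟨c, hc, hc0, f, hf0, hf⟩ := exists_colour_eigenfunction hm
  obtain ⟨μ, w, hw, hμ, hμ_gt⟩ := exists_quotientMatrix_eigenvector_gt hn hc hc0.ne
  have hμ_lt := quotientMatrix_eigenvalue_lt hc (by linarith) hw hμ
  have htop : 2 * (n : ℝ) ∈ (pancakeAdjMatrix m n).charpoly.roots :=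
    two_mul_mem_roots_charpoly_pancakeAdjMatrix
  have hfirst := nthLargestEig_one_le htop fun _ => le_of_mem_roots_charpoly_pancakeAdjMatrix
  have hsecond := min_le_nthLargestEig_two htop
    (mem_roots_charpoly_pancakeAdjMatrix hf hf0 hw hμ) hμ_lt.ne'
  rw [min_eq_right hμ_lt.le] at hsecond
  linarith
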